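/- For any a ≠ 0, the function g_a(x) = x² - a·x/(1 + (x/a)²) is 0.5-strongly convex and 3.5-smooth: its second derivative satisfies 0.5 ≤ g_a''(x) ≤ 3.5 for all x ∈ ℝ. -/

import Mathlib

/-! Writing `g_a(x) = x² - a³x/(a² + x²)` and differentiating twice gives
`g_a''(x) = 2 + 2a³x(3a² - x²)/(a² + x²)³`. The quotient has modulus at most `3/2` because of the
homogeneous polynomial inequality `4 |a³x(3a² - x²)| ≤ 3 (a² + x²)³`, which is a sum-of-squares
fact. -/

lemma four_mul_cubic_le_three_mul_sq_add_sq_pow_three (a x : ℝ) :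
    4 * (a ^ 3 * x * (3 * a ^ 2 - x ^ 2)) ≤ 3 * (a ^ 2 + x ^ 2) ^ 3 := by
  nlinarith [sq_nonneg (a ^ 2 - 2 * a * x - x ^ 2), sq_nonneg (x * (a - x)),
    sq_nonneg (a * (a - x))]

lemma abs_cubic_div_sq_add_sq_pow_three_le {a : ℝ} (ha : a ≠ 0) (x : ℝ) :
    |2 * a ^ 3 * x * (3 * a ^ 2 - x ^ 2) / (a ^ 2 + x ^ 2) ^ 3| ≤ 3 / 2 := by
  have hpos : 0 < (a ^ 2 + x ^ 2) ^ 3 := by positivity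
  have hup := four_mul_cubic_le_three_mul_sq_add_sq_pow_three a x
  have hlow := four_mul_cubic_le_three_mul_sq_add_sq_pow_three a (-x)
  rw [abs_le, le_div_iff₀ hpos, div_le_iff₀ hpos]
  constructor <;> linarith

lemma sub_mul_div_one_add_div_sq_eq {a : ℝ} (ha : a ≠ 0) :
    (fun x : ℝ => x ^ 2 - a * x / (1 + (x / a) ^ 2)) =
      fun x => x ^ 2 - a ^ 3 * x / (a ^ 2 + x ^ 2) := by
  funext x
  have : a ^ 2 + x ^ 2 ≠ 0 := by positivity
  field_simp

lemma hasDerivAt_sub_cubic_div_sq_add_sq {a : ℝ} (ha : a ≠ 0) (x : ℝ) :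
    HasDerivAt (fun x : ℝ => x ^ 2 - a ^ 3 * x / (a ^ 2 + x ^ 2))
      (2 * x - a ^ 3 * (a ^ 2 - x ^ 2) / (a ^ 2 + x ^ 2) ^ 2) x := by
  have hden : a ^ 2 + x ^ 2 ≠ 0 := by positivity
  have hsq : HasDerivAt (fun x : ℝ => x ^ 2) (2 * x) x := by simpa using hasDerivAt_pow 2 x
  have hquot := ((hasDerivAt_id' x).const_mul (a ^ 3)).fun_div (hsq.const_add (a ^ 2)) hden
  refine (hsq.fun_sub hquot).congr_deriv ?_
  field_simp
  ring

lemma hasDerivAt_sub_cubic_div_sq_add_sq_sq {a : ℝ} (ha : a ≠ 0) (x : ℝ) :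
    HasDerivAt (fun x : ℝ => 2 * x - a ^ 3 * (a ^ 2 - x ^ 2) / (a ^ 2 + x ^ 2) ^ 2)
      (2 + 2 * a ^ 3 * x * (3 * a ^ 2 - x ^ 2) / (a ^ 2 + x ^ 2) ^ 3) x := by
  have hden : a ^ 2 + x ^ 2 ≠ 0 := by positivity
  have hsq : HasDerivAt (fun x : ℝ => x ^ 2) (2 * x) x := by simpa using hasDerivAt_pow 2 x
  have hlin : HasDerivAt (fun x : ℝ => 2 * x) 2 x := by
    simpa using (hasDerivAt_id' x).const_mul 2
  have hquot :=
    ((hsq.const_sub (a ^ 2)).const_mul (a ^ 3)).fun_div ((hsq.const_add (a ^ 2)).fun_pow 2)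
      (pow_ne_zero 2 hden)
  refine (hlin.fun_sub hquot).congr_deriv ?_
  field_simp
  ring

lemma deriv_deriv_sub_mul_div_one_add_div_sq {a : ℝ} (ha : a ≠ 0) (x : ℝ) :
    deriv (deriv (fun x : ℝ => x ^ 2 - a * x / (1 + (x / a) ^ 2))) x =
      2 + 2 * a ^ 3 * x * (3 * a ^ 2 - x ^ 2) / (a ^ 2 + x ^ 2) ^ 3 := by
  have hderiv : deriv (fun x : ℝ => x ^ 2 - a * x / (1 + (x / a) ^ 2)) =
      fun x => 2 * x - a ^ 3 * (a ^ 2 - x ^ 2) / (a ^ 2 + x ^ 2) ^ 2 := by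
    funext y
    rw [sub_mul_div_one_add_div_sq_eq ha]
    exact (hasDerivAt_sub_cubic_div_sq_add_sq ha y).deriv
  rw [hderiv]
  exact (hasDerivAt_sub_cubic_div_sq_add_sq_sq ha x).deriv

theorem stmt_2 (a : ℝ) (ha : a ≠ 0) (x : ℝ) :
    0.5 ≤ deriv (deriv (fun x : ℝ => x ^ 2 - a * x / (1 + (x / a) ^ 2))) x ∧
    deriv (deriv (fun x : ℝ => x ^ 2 - a * x / (1 + (x / a) ^ 2))) x ≤ 3.5 := by
  rw [deriv_deriv_sub_mul_div_one_add_div_sq ha x]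
  obtain ⟨hlow, hup⟩ := abs_le.mp (abs_cubic_div_sq_add_sq_pow_three_le ha x)
  constructor <;> norm_num <;> linarith
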